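/- arXiv:2008.12834 — 2 statements merged into one kernel-verified Lean document; each statement's English description precedes it below -/
import Mathlib

section
/- Hoffman error bound: let P = {x ∈ ℝⁿ : Ax = b, Ex ≤ d} be a nonempty polyhedral set with A ∈ ℝ^{m×n}, E ∈ ℝ^{k×n}. Then there exists κ ≥ 0 such that for all x ∈ ℝⁿ with Ex ≤ d, dist(x, P) ≤ κ‖Ax − b‖. -/
set_option linter.unusedSectionVars false
set_option maxHeartbeats 1000000

open Finset
open scoped RealInnerProductSpace

section ConeLemmas

variable {H : Type*} [NormedAddCommGroup H] [InnerProductSpace ℝ H] [FiniteDimensional ℝ H]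
variable {ι : Type*} [Fintype ι]

/-- The cone generated by the vectors `g i` for `i ∈ s`. -/
def coneOf (g : ι → H) (s : Finset ι) : Set H :=
  {v | ∃ lam : ι → ℝ, (∀ i, 0 ≤ lam i) ∧ (∀ i ∉ s, lam i = 0) ∧ v = ∑ i, lam i • g i}

lemma coneOf_mono (g : ι → H) {s t : Finset ι} (h : s ⊆ t) : coneOf g s ⊆ coneOf g t := by
  rintro v ⟨lam, h1, h2, rfl⟩
  exact ⟨lam, h1, fun i hi => h2 i (fun hs => hi (h hs)), rfl⟩

lemma generator_mem_coneOf (g : ι → H) {s : Finset ι} {i : ι} (hi : i ∈ s) :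
    g i ∈ coneOf g s := by
  classical
  refine ⟨fun j => if j = i then 1 else 0, ?_, ?_, ?_⟩
  · intro j; by_cases h : j = i <;> simp [h]
  · intro j hj; simp only [ite_eq_right_iff]; rintro rfl; exact absurd hi hj
  · simp [ite_smul]

lemma caratheodory_coneOf (g : ι → H) :
    ∀ (s : Finset ι) (v : H), v ∈ coneOf g s →
      ∃ t : Finset ι, t ⊆ s ∧ LinearIndependent ℝ (fun i : t => g i) ∧ v ∈ coneOf g t := by
  classical
  intro s
  induction s using Finset.strongInductionOn with
  | _ s ih =>
    intro v hv
    by_cases hli : LinearIndependent ℝ (fun i : s => g i)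
    · exact ⟨s, subset_rfl, hli, hv⟩
    obtain ⟨lam, hnn, hsupp, rfl⟩ := hv
    rw [Fintype.not_linearIndependent_iff] at hli
    obtain ⟨c0, hc0, j0, hj0⟩ := hli
    have hsgn : ∃ c : ι → ℝ, (∑ i, c i • g i = 0) ∧ (∀ i ∉ s, c i = 0) ∧ ∃ i ∈ s, 0 < c i := by
      set c1 : ι → ℝ := fun i => if h : i ∈ s then c0 ⟨i, h⟩ else 0 with hc1
      have hsum : ∑ i, c1 i • g i = 0 := by
        rw [← Finset.sum_subset (Finset.subset_univ s)
          (by intro i _ hi; simp [hc1, hi])]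
        rw [← Finset.sum_attach s fun i => c1 i • g i]
        simpa [hc1] using hc0
      have hs0 : ∀ i ∉ s, c1 i = 0 := by intro i hi; simp [hc1, hi]
      rcases lt_trichotomy (c0 j0) 0 with h | h | h
      · refine ⟨-c1, by simpa using congrArg Neg.neg hsum, fun i hi => by simp [hs0 i hi],
          j0, j0.2, ?_⟩
        simp only [Pi.neg_apply, hc1, j0.2, dif_pos]
        simp only [Subtype.coe_eta]
        linarith
      · exact absurd h hj0
      · exact ⟨c1, hsum, hs0, j0, j0.2, by simp only [hc1, j0.2, dif_pos, Subtype.coe_eta]; exact h⟩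
    obtain ⟨c, hcsum, hcs, hcpos⟩ := hsgn
    set T : Finset ι := s.filter (fun i => 0 < c i) with hT
    have hTne : T.Nonempty := by
      obtain ⟨i, his, hci⟩ := hcpos
      exact ⟨i, by simp [hT, his, hci]⟩
    obtain ⟨i0, hi0T, hi0r⟩ := Finset.exists_mem_eq_inf' hTne (fun i => lam i / c i)
    set r : ℝ := T.inf' hTne (fun i => lam i / c i) with hr
    have hi0s : i0 ∈ s := (Finset.mem_filter.mp hi0T).1
    have hi0c : 0 < c i0 := (Finset.mem_filter.mp hi0T).2
    have hrnn : 0 ≤ r := by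
      rw [hr]
      apply Finset.le_inf'
      intro i hiT
      exact div_nonneg (hnn i) (Finset.mem_filter.mp hiT).2.le
    set lam' : ι → ℝ := fun i => lam i - r * c i with hlam'
    have hlam'nn : ∀ i, 0 ≤ lam' i := by
      intro i
      by_cases his : i ∈ s
      · by_cases hci : 0 < c i
        · have : r ≤ lam i / c i := Finset.inf'_le _ (Finset.mem_filter.mpr ⟨his, hci⟩)
          have := (le_div_iff₀ hci).mp this
          simp only [hlam']; linarith
        · have : r * c i ≤ 0 := mul_nonpos_of_nonneg_of_nonpos hrnn (not_lt.mp hci)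
          have := hnn i
          simp only [hlam']; linarith
      · simp [hlam', hsupp i his, hcs i his]
    have hlam'i0 : lam' i0 = 0 := by
      have hc0' : c i0 ≠ 0 := ne_of_gt hi0c
      simp only [hlam', hi0r]
      field_simp
      ring
    have hsum' : ∑ i, lam' i • g i = ∑ i, lam i • g i := by
      simp only [hlam', sub_smul, mul_smul, Finset.sum_sub_distrib]
      rw [← Finset.smul_sum, hcsum, smul_zero, sub_zero]
    have herase : (∑ i, lam i • g i) ∈ coneOf g (s.erase i0) := by
      refine ⟨lam', hlam'nn, ?_, hsum'.symm⟩
      intro i hi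
      by_cases hii : i = i0
      · subst hii; exact hlam'i0
      · have his : i ∉ s := by
          intro his; exact hi (Finset.mem_erase.mpr ⟨hii, his⟩)
        simp [hlam', hsupp i his, hcs i his]
    obtain ⟨t, hts, hli2, hv2⟩ := ih (s.erase i0) (Finset.erase_ssubset hi0s) _ herase
    exact ⟨t, hts.trans (Finset.erase_subset _ _), hli2, hv2⟩

/-- The summation linear map from coefficients on `t` to `H`. -/
noncomputable def sumMap (g : ι → H) (t : Finset ι) : (t → ℝ) →ₗ[ℝ] H where
  toFun mu := ∑ i : t, mu i • g i
  map_add' x y := by simp [add_smul, Finset.sum_add_distrib]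
  map_smul' c x := by simp [Finset.smul_sum, smul_smul]

lemma coneOf_eq_image (g : ι → H) (t : Finset ι) :
    coneOf g t = sumMap g t '' {mu | ∀ i, 0 ≤ mu i} := by
  classical
  ext v
  constructor
  · rintro ⟨lam, h1, h2, rfl⟩
    refine ⟨fun i => lam i, fun i => h1 i, ?_⟩
    simp only [sumMap, LinearMap.coe_mk, AddHom.coe_mk]
    rw [← Finset.sum_subset (Finset.subset_univ t) (by intro i _ hi; simp [h2 i hi])]
    exact (Finset.sum_attach t fun i => lam i • g i)
  · rintro ⟨mu, hmu, rfl⟩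
    refine ⟨fun i => if h : i ∈ t then mu ⟨i, h⟩ else 0, ?_, ?_, ?_⟩
    · intro i; by_cases h : i ∈ t <;> simp [h]; exact hmu _
    · intro i hi; simp [hi]
    · simp only [sumMap, LinearMap.coe_mk, AddHom.coe_mk]
      rw [← Finset.sum_subset (Finset.subset_univ t) (by intro i _ hi; simp [hi])]
      rw [← Finset.sum_attach t fun i => (if h : i ∈ t then mu ⟨i, h⟩ else 0) • g i]
      exact Finset.sum_congr rfl fun i _ => by simp [i.2]

lemma sumMap_injective (g : ι → H) (t : Finset ι)
    (h : LinearIndependent ℝ (fun i : t => g i)) :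
    LinearMap.ker (sumMap g t) = ⊥ := by
  rw [LinearMap.ker_eq_bot']
  intro mu hmu
  have := Fintype.linearIndependent_iff.mp h mu hmu
  funext i; exact this i

lemma isClosed_coneOf_linIndep (g : ι → H) (t : Finset ι)
    (h : LinearIndependent ℝ (fun i : t => g i)) :
    IsClosed (coneOf g t) := by
  rw [coneOf_eq_image]
  have hemb := LinearMap.isClosedEmbedding_of_injective (sumMap_injective g t h)
  refine hemb.isClosedMap _ ?_
  have : {mu : t → ℝ | ∀ i, 0 ≤ mu i} = ⋂ i, (fun mu : t → ℝ => mu i) ⁻¹' Set.Ici 0 := by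
    ext mu; simp [Set.mem_iInter]
  rw [this]
  exact isClosed_iInter fun i => IsClosed.preimage (continuous_apply i) isClosed_Ici

lemma isClosed_coneOf (g : ι → H) (s : Finset ι) : IsClosed (coneOf g s) := by
  classical
  have : coneOf g s =
      ⋃ t : {t : Finset ι // t ⊆ s ∧ LinearIndependent ℝ (fun i : t => g i)},
        coneOf g t.1 := by
    ext v
    simp only [Set.mem_iUnion]
    constructor
    · intro hv
      obtain ⟨t, h1, h2, h3⟩ := caratheodory_coneOf g s v hv
      exact ⟨⟨t, h1, h2⟩, h3⟩
    · rintro ⟨t, ht⟩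
      exact coneOf_mono g t.2.1 ht
  rw [this]
  exact isClosed_iUnion_of_finite fun t => isClosed_coneOf_linIndep g t.1 t.2.2

/-- `coneOf` as a convex cone. -/
noncomputable def coneOfCone (g : ι → H) (s : Finset ι) : ConvexCone ℝ H where
  carrier := coneOf g s
  smul_mem' := by
    rintro c hc v ⟨lam, h1, h2, rfl⟩
    exact ⟨fun i => c * lam i, fun i => mul_nonneg hc.le (h1 i),
      fun i hi => by simp [h2 i hi], by simp [Finset.smul_sum, mul_smul]⟩
  add_mem' := by
    rintro v ⟨lam, h1, h2, rfl⟩ w ⟨lam', h1', h2', rfl⟩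
    exact ⟨fun i => lam i + lam' i, fun i => add_nonneg (h1 i) (h1' i),
      fun i hi => by simp [h2 i hi, h2' i hi], by simp [add_smul, Finset.sum_add_distrib]⟩

lemma zero_mem_coneOf (g : ι → H) (s : Finset ι) : (0 : H) ∈ coneOf g s :=
  ⟨0, fun _ => le_rfl, fun _ _ => rfl, by simp⟩

/-- Farkas-type duality. -/
lemma mem_coneOf_of_dual (g : ι → H) (s : Finset ι) (v : H)
    (hv : ∀ w : H, (∀ i ∈ s, 0 ≤ ⟪g i, w⟫) → 0 ≤ ⟪v, w⟫) :
    v ∈ coneOf g s := by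
  by_contra hvn
  have hconv : Convex ℝ (coneOf g s) := (coneOfCone g s).convex
  obtain ⟨f, u, hfu, huv⟩ := geometric_hahn_banach_closed_point hconv (isClosed_coneOf g s) hvn
  have hu0 : 0 < u := by simpa using hfu 0 (zero_mem_coneOf g s)
  have hle : ∀ a ∈ coneOf g s, f a ≤ 0 := by
    intro a ha
    by_contra hpos
    push_neg at hpos
    have hm : (u / f a + 1) • a ∈ coneOf g s := (coneOfCone g s).smul_mem (by positivity) ha
    have h7 := hfu _ hm
    rw [map_smul, smul_eq_mul] at h7
    have h8 : (u / f a + 1) * f a = u + f a := by field_simp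
    linarith
  set w : H := -(InnerProductSpace.toDual ℝ H).symm f with hw
  have key : ∀ y : H, ⟪y, w⟫ = - f y := by
    intro y
    rw [hw, inner_neg_right, real_inner_comm, InnerProductSpace.toDual_symm_apply]
  have h9 := hv w (fun i hi => by rw [key]; linarith [hle _ (generator_mem_coneOf g hi)])
  rw [key] at h9
  linarith

lemma coeff_bound_linIndep (g : ι → H) (t : Finset ι) :
    ∃ C : ℝ, 0 ≤ C ∧ (LinearIndependent ℝ (fun i : t => g i) →
      ∀ v ∈ coneOf g t, ∃ lam : ι → ℝ, (∀ i, 0 ≤ lam i) ∧ (∀ i ∉ t, lam i = 0) ∧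
        v = ∑ i, lam i • g i ∧ ∀ i, lam i ≤ C * ‖v‖) := by
  classical
  by_cases h : LinearIndependent ℝ (fun i : t => g i)
  swap
  · exact ⟨0, le_rfl, fun h' => absurd h' h⟩
  set T := sumMap g t with hT
  have hinj : Function.Injective T := LinearMap.ker_eq_bot.mp (sumMap_injective g t h)
  set e := LinearEquiv.ofInjective T hinj with he
  set f := LinearMap.toContinuousLinearMap (e.symm.toLinearMap) with hf
  refine ⟨‖f‖, f.opNorm_nonneg, fun _ v hv => ?_⟩
  obtain ⟨lam0, h1, h2, rfl⟩ := hv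
  set mu : t → ℝ := fun i => lam0 i with hmu
  have hTmu : T mu = ∑ i, lam0 i • g i := by
    simp only [hT, sumMap, LinearMap.coe_mk, AddHom.coe_mk, hmu]
    rw [← Finset.sum_subset (Finset.subset_univ t) (by intro i _ hi; simp [h2 i hi])]
    exact Finset.sum_attach t fun i => lam0 i • g i
  have hmu_norm : ‖mu‖ ≤ ‖f‖ * ‖T mu‖ := by
    have heq : mu = f (e mu) := by simp [hf, he]
    calc ‖mu‖ = ‖f (e mu)‖ := by rw [← heq]
      _ ≤ ‖f‖ * ‖e mu‖ := f.le_opNorm _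
      _ = ‖f‖ * ‖T mu‖ := by
          have h5 : (e mu : H) = T mu := by simp [he]
          have h6 : ‖e mu‖ = ‖T mu‖ := by rw [← h5]; rfl
          rw [h6]
  set lam : ι → ℝ := fun i => if hi : i ∈ t then mu ⟨i, hi⟩ else 0 with hlam
  have hsum : ∑ i, lam i • g i = ∑ i, lam0 i • g i := by
    rw [← hTmu]
    simp only [hT, sumMap, LinearMap.coe_mk, AddHom.coe_mk]
    rw [← Finset.sum_subset (Finset.subset_univ t) (by intro i _ hi; simp [hlam, hi])]
    rw [← Finset.sum_attach t fun i => lam i • g i]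
    exact Finset.sum_congr rfl fun i _ => by simp [hlam, i.2]
  refine ⟨lam, ?_, ?_, hsum.symm, ?_⟩
  · intro i
    by_cases hi : i ∈ t
    · simp only [hlam, hi, dif_pos]; exact h1 _
    · simp [hlam, hi]
  · intro i hi; simp [hlam, hi]
  · intro i
    have hnv : 0 ≤ ‖f‖ * ‖∑ i, lam0 i • g i‖ := by positivity
    by_cases hi : i ∈ t
    · have hli : lam i = mu ⟨i, hi⟩ := by simp [hlam, hi]
      rw [hli]
      calc mu ⟨i, hi⟩ ≤ |mu ⟨i, hi⟩| := le_abs_self _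
        _ ≤ ‖mu‖ := by
            have := norm_le_pi_norm mu ⟨i, hi⟩
            simpa using this
        _ ≤ ‖f‖ * ‖T mu‖ := hmu_norm
        _ = ‖f‖ * ‖∑ i, lam0 i • g i‖ := by rw [hTmu]
    · simp only [hlam, hi, dif_neg, not_false_iff]
      exact hnv

/-- Global coefficient bound. -/
lemma coneOf_coeff_bound (g : ι → H) :
    ∃ C : ℝ, 0 ≤ C ∧ ∀ (s : Finset ι) (v : H), v ∈ coneOf g s →
      ∃ lam : ι → ℝ, (∀ i, 0 ≤ lam i) ∧ (∀ i ∉ s, lam i = 0) ∧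
        v = ∑ i, lam i • g i ∧ ∀ i, lam i ≤ C * ‖v‖ := by
  classical
  choose Cf hCf0 hCf using coeff_bound_linIndep g
  refine ⟨∑ t : Finset ι, Cf t, Finset.sum_nonneg fun t _ => hCf0 t, ?_⟩
  intro s v hv
  obtain ⟨t, hts, hli, hvt⟩ := caratheodory_coneOf g s v hv
  obtain ⟨lam, h1, h2, h3, h4⟩ := hCf t hli v hvt
  refine ⟨lam, h1, fun i hi => h2 i (fun ht => hi (hts ht)), h3, fun i => ?_⟩
  calc lam i ≤ Cf t * ‖v‖ := h4 i
    _ ≤ (∑ u : Finset ι, Cf u) * ‖v‖ := by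
        apply mul_le_mul_of_nonneg_right _ (norm_nonneg v)
        exact Finset.single_le_sum (fun u _ => hCf0 u) (Finset.mem_univ t)

end ConeLemmas

/-- Coordinates are bounded by the Euclidean norm. -/
lemma euclid_coord_le_norm {m : ℕ} (y : EuclideanSpace ℝ (Fin m)) (i : Fin m) :
    |y i| ≤ ‖y‖ := by
  have h1 : y i = ⟪EuclideanSpace.single i (1 : ℝ), y⟫ := by
    rw [EuclideanSpace.inner_single_left]; simp
  rw [h1]
  calc |⟪EuclideanSpace.single i (1 : ℝ), y⟫| ≤ ‖EuclideanSpace.single i (1 : ℝ)‖ * ‖y‖ :=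
        abs_real_inner_le_norm _ _
    _ = ‖y‖ := by rw [EuclideanSpace.norm_single]; simp

/-- Hoffman error bound: for a nonempty polyhedron `P = {x : Ax = b, Ex ≤ d}`, there is
`κ ≥ 0` with `dist(x, P) ≤ κ‖Ax - b‖` for every `x` satisfying `Ex ≤ d`. -/
theorem stmt_11 {m n k : ℕ}
    (A : EuclideanSpace ℝ (Fin n) →ₗ[ℝ] EuclideanSpace ℝ (Fin m))
    (E : EuclideanSpace ℝ (Fin n) →ₗ[ℝ] EuclideanSpace ℝ (Fin k))
    (b : EuclideanSpace ℝ (Fin m)) (d : EuclideanSpace ℝ (Fin k))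
    (hne : ({x | A x = b ∧ ∀ j, E x j ≤ d j} : Set (EuclideanSpace ℝ (Fin n))).Nonempty) :
    ∃ κ : ℝ, 0 ≤ κ ∧ ∀ x : EuclideanSpace ℝ (Fin n), (∀ j, E x j ≤ d j) →
      Metric.infDist x {y | A y = b ∧ ∀ j, E y j ≤ d j} ≤ κ * ‖A x - b‖ := by
  classical
  set H := EuclideanSpace ℝ (Fin n)
  set P : Set H := {x | A x = b ∧ ∀ j, E x j ≤ d j} with hP
  -- the generators
  set g : (Fin m ⊕ Fin m) ⊕ Fin k → H :=
    Sum.elim (Sum.elim (fun i => LinearMap.adjoint A (EuclideanSpace.single i 1))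
      (fun i => - LinearMap.adjoint A (EuclideanSpace.single i 1)))
      (fun j => LinearMap.adjoint E (EuclideanSpace.single j 1)) with hg
  have hginner : ∀ (w : H),
      (∀ i : Fin m, ⟪g (Sum.inl (Sum.inl i)), w⟫ = A w i) ∧
      (∀ i : Fin m, ⟪g (Sum.inl (Sum.inr i)), w⟫ = -(A w i)) ∧
      (∀ j : Fin k, ⟪g (Sum.inr j), w⟫ = E w j) := by
    intro w
    refine ⟨fun i => ?_, fun i => ?_, fun j => ?_⟩
    · simp only [hg, Sum.elim_inl, LinearMap.adjoint_inner_left,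
        EuclideanSpace.inner_single_left]
      simp
    · simp only [hg, Sum.elim_inl, Sum.elim_inr, inner_neg_left,
        LinearMap.adjoint_inner_left, EuclideanSpace.inner_single_left]
      simp
    · simp only [hg, Sum.elim_inr, LinearMap.adjoint_inner_left,
        EuclideanSpace.inner_single_left]
      simp
  -- closed and convex
  have hPclosed : IsClosed P := by
    have h1 : IsClosed {x : H | A x = b} :=
      isClosed_eq A.continuous_of_finiteDimensional continuous_const
    have h2 : IsClosed {x : H | ∀ j, E x j ≤ d j} := by
      have : {x : H | ∀ j, E x j ≤ d j} = ⋂ j, {x : H | E x j ≤ d j} := by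
        ext x; simp [Set.mem_iInter]
      rw [this]
      refine isClosed_iInter fun j => isClosed_le ?_ continuous_const
      exact (continuous_apply j).comp ((PiLp.continuous_ofLp (p := 2) (β := fun _ : Fin k => ℝ)).comp E.continuous_of_finiteDimensional)
    have : P = {x : H | A x = b} ∩ {x : H | ∀ j, E x j ≤ d j} := rfl
    rw [this]; exact h1.inter h2
  have hPconvex : Convex ℝ P := by
    rintro y ⟨hy1, hy2⟩ z ⟨hz1, hz2⟩ a c ha hc hac
    constructor
    · simp only [map_add, map_smul, hy1, hz1]
      rw [← add_smul, hac, one_smul]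
    · intro j
      have h1 : E (a • y + c • z) j = a * E y j + c * E z j := by
        simp [map_add, map_smul]
      rw [h1]
      calc a * E y j + c * E z j ≤ a * d j + c * d j := by
            apply add_le_add
            · exact mul_le_mul_of_nonneg_left (hy2 j) ha
            · exact mul_le_mul_of_nonneg_left (hz2 j) hc
        _ = d j := by rw [← add_mul, hac, one_mul]
  -- the coefficient bound constant
  obtain ⟨C, hC0, hCbound⟩ := coneOf_coeff_bound g
  refine ⟨2 * m * C, by positivity, ?_⟩
  intro x hx
  -- projection onto P
  obtain ⟨p, hpP, hproj⟩ :=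
    exists_norm_eq_iInf_of_complete_convex hne hPclosed.isComplete hPconvex x
  have hchar : ∀ w ∈ P, ⟪x - p, w - p⟫ ≤ 0 :=
    (norm_eq_iInf_iff_real_inner_le_zero hPconvex hpP).mp hproj
  set v : H := x - p with hv
  -- active set
  set s : Finset ((Fin m ⊕ Fin m) ⊕ Fin k) :=
    Finset.univ.filter (fun i => Sum.elim (fun _ => True) (fun j => E p j = d j) i) with hs
  have hsl : ∀ i : Fin m ⊕ Fin m, Sum.inl i ∈ s := by
    intro i; simp [hs]
  have hsr : ∀ j : Fin k, (Sum.inr j ∈ s ↔ E p j = d j) := by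
    intro j; simp [hs]
  -- v is in the cone
  have hvcone : v ∈ coneOf g s := by
    apply mem_coneOf_of_dual
    intro w hw
    -- decode dual conditions
    obtain ⟨hgi1, hgi2, hgi3⟩ := hginner w
    have hAw : A w = 0 := by
      ext i
      have h1 : 0 ≤ A w i := by rw [← hgi1 i]; exact hw _ (hsl _)
      have h2 : 0 ≤ -(A w i) := by rw [← hgi2 i]; exact hw _ (hsl _)
      simpa using le_antisymm (by linarith) h1
    have hEw : ∀ j, E p j = d j → 0 ≤ E w j := by
      intro j hj
      rw [← hgi3 j]; exact hw _ ((hsr j).mpr hj)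
    -- u = -w is a feasible direction from p
    set u : H := -w with hu
    have hAu : A u = 0 := by simp [hu, hAw]
    have hEu : ∀ j, E p j = d j → E u j ≤ 0 := by
      intro j hj
      have := hEw j hj
      simp only [hu, map_neg]
      simpa using this
    -- find t > 0 with p + t • u ∈ P
    set I : Finset (Fin k) := Finset.univ.filter (fun j => E p j ≠ d j) with hI
    obtain ⟨t, ht0, htI⟩ : ∃ t : ℝ, 0 < t ∧ ∀ j ∈ I, t * (|E u j| + 1) ≤ d j - E p j := by
      by_cases hIne : I.Nonempty
      · refine ⟨min 1 (I.inf' hIne fun j => (d j - E p j) / (|E u j| + 1)), ?_, ?_⟩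
        · apply lt_min one_pos
          rw [Finset.lt_inf'_iff]
          intro j hj
          have hj1 : E p j ≠ d j := (Finset.mem_filter.mp hj).2
          have hj2 : E p j < d j := lt_of_le_of_ne (hpP.2 j) hj1
          apply div_pos (by linarith) (by positivity)
        · intro j hj
          have hle : min 1 (I.inf' hIne fun j => (d j - E p j) / (|E u j| + 1)) ≤
              (d j - E p j) / (|E u j| + 1) :=
            le_trans (min_le_right _ _) (Finset.inf'_le _ hj)
          have hpos : (0:ℝ) < |E u j| + 1 := by positivity
          calc min 1 (I.inf' hIne fun j => (d j - E p j) / (|E u j| + 1)) * (|E u j| + 1)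
              ≤ ((d j - E p j) / (|E u j| + 1)) * (|E u j| + 1) :=
                mul_le_mul_of_nonneg_right hle hpos.le
            _ = d j - E p j := div_mul_cancel₀ _ hpos.ne'
      · exact ⟨1, one_pos, fun j hj => absurd ⟨j, hj⟩ hIne⟩
    have hmem : p + t • u ∈ P := by
      constructor
      · simp [map_add, map_smul, hpP.1, hAu]
      · intro j
        have h1 : E (p + t • u) j = E p j + t * E u j := by
          simp [map_add, map_smul]
        rw [h1]
        by_cases hj : E p j = d j
        · have := hEu j hj
          nlinarith
        · have hjI : j ∈ I := by simp [hI, hj]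
          have h2 := htI j hjI
          have h3 : E u j ≤ |E u j| := le_abs_self _
          nlinarith
    have hch := hchar _ hmem
    have h4 : p + t • u - p = t • u := by abel
    rw [h4, real_inner_smul_right] at hch
    have h5 : ⟪v, u⟫ ≤ 0 := by nlinarith [hch, ht0]
    have h6 : ⟪v, u⟫ = -⟪v, w⟫ := by simp [hu, inner_neg_right]
    linarith [h6 ▸ h5]
  -- apply coefficient bound
  obtain ⟨lam, hl1, hl2, hl3, hl4⟩ := hCbound s v hvcone
  -- compute ‖v‖²
  obtain ⟨hgi1, hgi2, hgi3⟩ := hginner v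
  have hAv : A v = A x - b := by rw [hv, map_sub, hpP.1]
  have hsplit : ⟪v, v⟫ = ∑ i, lam i * ⟪g i, v⟫ := by
    have : (⟪v, v⟫ : ℝ) = ⟪∑ i, lam i • g i, v⟫ := by rw [← hl3]
    rw [this, sum_inner]
    exact Finset.sum_congr rfl fun i _ => real_inner_smul_left _ _ _
  have hbound1 : ∀ i : Fin m,
      lam (Sum.inl (Sum.inl i)) * ⟪g (Sum.inl (Sum.inl i)), v⟫ ≤ C * ‖v‖ * ‖A x - b‖ := by
    intro i
    rw [hgi1 i, hAv]
    calc lam (Sum.inl (Sum.inl i)) * (A x - b) i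
        ≤ lam (Sum.inl (Sum.inl i)) * |(A x - b) i| :=
          mul_le_mul_of_nonneg_left (le_abs_self _) (hl1 _)
      _ ≤ (C * ‖v‖) * ‖A x - b‖ :=
          mul_le_mul (hl4 _) (euclid_coord_le_norm _ i) (abs_nonneg _) (by positivity)
      _ = C * ‖v‖ * ‖A x - b‖ := by ring
  have hbound2 : ∀ i : Fin m,
      lam (Sum.inl (Sum.inr i)) * ⟪g (Sum.inl (Sum.inr i)), v⟫ ≤ C * ‖v‖ * ‖A x - b‖ := by
    intro i
    rw [hgi2 i, hAv]
    calc lam (Sum.inl (Sum.inr i)) * -((A x - b) i)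
        ≤ lam (Sum.inl (Sum.inr i)) * |(A x - b) i| :=
          mul_le_mul_of_nonneg_left (neg_le_abs _) (hl1 _)
      _ ≤ (C * ‖v‖) * ‖A x - b‖ :=
          mul_le_mul (hl4 _) (euclid_coord_le_norm _ i) (abs_nonneg _) (by positivity)
      _ = C * ‖v‖ * ‖A x - b‖ := by ring
  have hbound3 : ∀ j : Fin k, lam (Sum.inr j) * ⟪g (Sum.inr j), v⟫ ≤ 0 := by
    intro j
    by_cases hj : E p j = d j
    · rw [hgi3 j]
      have hEv : E v j = E x j - E p j := by rw [hv, map_sub]; rfl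
      apply mul_nonpos_of_nonneg_of_nonpos (hl1 _)
      rw [hEv, hj]
      linarith [hx j]
    · have hz : lam (Sum.inr j) = 0 := hl2 _ (by simp [hs, hj])
      rw [hz, zero_mul]
  have htotal : ⟪v, v⟫ ≤ (m : ℝ) * (C * ‖v‖ * ‖A x - b‖) + (m : ℝ) * (C * ‖v‖ * ‖A x - b‖) + 0 := by
    rw [hsplit, Fintype.sum_sum_type, Fintype.sum_sum_type]
    refine add_le_add (add_le_add ?_ ?_) ?_
    · calc ∑ i : Fin m, lam (Sum.inl (Sum.inl i)) * ⟪g (Sum.inl (Sum.inl i)), v⟫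
          ≤ ∑ _i : Fin m, C * ‖v‖ * ‖A x - b‖ := Finset.sum_le_sum fun i _ => hbound1 i
        _ = (m : ℝ) * (C * ‖v‖ * ‖A x - b‖) := by
            rw [Finset.sum_const, Finset.card_univ, Fintype.card_fin, nsmul_eq_mul]
    · calc ∑ i : Fin m, lam (Sum.inl (Sum.inr i)) * ⟪g (Sum.inl (Sum.inr i)), v⟫
          ≤ ∑ _i : Fin m, C * ‖v‖ * ‖A x - b‖ := Finset.sum_le_sum fun i _ => hbound2 i
        _ = (m : ℝ) * (C * ‖v‖ * ‖A x - b‖) := by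
            rw [Finset.sum_const, Finset.card_univ, Fintype.card_fin, nsmul_eq_mul]
    · exact Finset.sum_nonpos fun j _ => hbound3 j
  have hsq : ‖v‖ * ‖v‖ ≤ 2 * (m : ℝ) * C * ‖v‖ * ‖A x - b‖ := by
    have := real_inner_self_eq_norm_mul_norm v
    nlinarith [htotal]
  have hfinal : ‖v‖ ≤ 2 * (m : ℝ) * C * ‖A x - b‖ := by
    rcases eq_or_lt_of_le (norm_nonneg v) with h | h
    · rw [← h]; positivity
    · nlinarith [hsq, h]
  calc Metric.infDist x P ≤ dist x p := Metric.infDist_le_dist_of_mem hpP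
    _ = ‖v‖ := by rw [dist_eq_norm]
    _ ≤ 2 * (m : ℝ) * C * ‖A x - b‖ := hfinal
end

section
/- Superlinear convergence of the semismooth Newton method: Suppose F : ℝⁿ → ℝⁿ, F(x*) = 0, F is Newton differentiable at x* with Newton derivative G on a neighborhood N(x*), G(x) is nonsingular for all x ∈ N(x*), and sup{‖G(x)^{-1}‖ : x ∈ N(x*)} < ∞. Then the iteration x^{l+1} = x^l − G(x^l)^{-1} F(x^l) converges superlinearly to x* provided ‖x^0 − x*‖ is sufficiently small, i.e., ‖x^{l+1} − x*‖ = o(‖x^l − x*‖). -/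
open Filter

/-- Superlinear convergence of the (semismooth) Newton method: if `F(x*) = 0`, `F` is
Newton differentiable at `x*` with Newton derivative `G` on a neighborhood `N` of `x*`,
`G(x)` is invertible with uniformly bounded inverses `Gi(x)` on `N`, then for `x⁰` close
enough to `x*` the Newton iterates converge to `x*` superlinearly. -/
theorem stmt_14 {n : ℕ} (F : EuclideanSpace ℝ (Fin n) → EuclideanSpace ℝ (Fin n))
    (xstar : EuclideanSpace ℝ (Fin n)) (hF : F xstar = 0)
    (N : Set (EuclideanSpace ℝ (Fin n))) (hN : N ∈ nhds xstar)
    (G Gi : EuclideanSpace ℝ (Fin n) → EuclideanSpace ℝ (Fin n) →L[ℝ] EuclideanSpace ℝ (Fin n))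
    (hNewton : ∀ ε > (0 : ℝ), ∃ δ > (0 : ℝ), ∀ h : EuclideanSpace ℝ (Fin n),
      ‖h‖ ≤ δ → xstar + h ∈ N → ‖F (xstar + h) - F xstar - G (xstar + h) h‖ ≤ ε * ‖h‖)
    (hGinv : ∀ x ∈ N, (Gi x).comp (G x) = ContinuousLinearMap.id ℝ _ ∧
      (G x).comp (Gi x) = ContinuousLinearMap.id ℝ _)
    (C : ℝ) (hC : ∀ x ∈ N, ‖Gi x‖ ≤ C) :
    ∃ δ > (0 : ℝ), ∀ x : ℕ → EuclideanSpace ℝ (Fin n),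
      ‖x 0 - xstar‖ < δ →
      (∀ l : ℕ, x (l + 1) = x l - Gi (x l) (F (x l))) →
      Tendsto x atTop (nhds xstar) ∧
        ∀ ε > (0 : ℝ), ∃ L : ℕ, ∀ l ≥ L, ‖x (l + 1) - xstar‖ ≤ ε * ‖x l - xstar‖ := by
  obtain ⟨r, hr, hball⟩ := Metric.mem_nhds_iff.mp hN
  have hC0 : 0 ≤ C := le_trans (norm_nonneg _) (hC xstar (mem_of_mem_nhds hN))
  have hC1 : (0:ℝ) < C + 1 := by linarith
  -- key estimate
  have key : ∀ y ∈ N, ∀ ε : ℝ,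
      ‖F y - F xstar - G y (y - xstar)‖ ≤ ε * ‖y - xstar‖ →
      ‖y - Gi y (F y) - xstar‖ ≤ (C + 1) * ε * ‖y - xstar‖ := by
    intro y hy ε hest
    have hid : Gi y (G y (y - xstar)) = y - xstar := by
      have := (hGinv y hy).1
      calc Gi y (G y (y - xstar)) = ((Gi y).comp (G y)) (y - xstar) := rfl
        _ = y - xstar := by rw [this]; rfl
    have heq : y - Gi y (F y) - xstar = -(Gi y (F y - F xstar - G y (y - xstar))) := by
      rw [hF, map_sub, map_sub, hid, map_zero]
      abel
    rw [heq, norm_neg]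
    calc ‖Gi y (F y - F xstar - G y (y - xstar))‖
        ≤ ‖Gi y‖ * ‖F y - F xstar - G y (y - xstar)‖ := (Gi y).le_opNorm _
      _ ≤ C * (ε * ‖y - xstar‖) := by
          apply mul_le_mul (hC y hy) hest (norm_nonneg _) hC0
      _ ≤ (C + 1) * ε * ‖y - xstar‖ := by
          have hε : 0 ≤ ε * ‖y - xstar‖ :=
            le_trans (norm_nonneg _) hest
          nlinarith [norm_nonneg (y - xstar)]
  obtain ⟨δ₀, hδ₀, hN0⟩ := hNewton (1 / (2 * (C + 1))) (by positivity)
  set δ : ℝ := min δ₀ (r / 2) with hδdef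
  have hδpos : 0 < δ := lt_min hδ₀ (by linarith)
  refine ⟨δ, hδpos, fun x hx0 hiter => ?_⟩
  -- the contraction step at any point within δ of xstar
  have step : ∀ y, ‖y - xstar‖ < δ →
      ‖y - Gi y (F y) - xstar‖ ≤ (1/2) * ‖y - xstar‖ ∧ y ∈ N := by
    intro y hy
    have hyN : y ∈ N := by
      apply hball
      rw [Metric.mem_ball, dist_eq_norm]
      exact lt_of_lt_of_le (lt_of_lt_of_le hy (min_le_right _ _)) (by linarith)
    have hest := hN0 (y - xstar) (le_of_lt (lt_of_lt_of_le hy (min_le_left _ _)))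
      (by rwa [add_sub_cancel])
    rw [add_sub_cancel] at hest
    have := key y hyN _ hest
    constructor
    · calc ‖y - Gi y (F y) - xstar‖ ≤ (C + 1) * (1 / (2 * (C + 1))) * ‖y - xstar‖ := this
        _ = (1/2) * ‖y - xstar‖ := by
            field_simp
    · exact hyN
  -- geometric decay
  have decay : ∀ l : ℕ, ‖x l - xstar‖ ≤ (1/2 : ℝ)^l * ‖x 0 - xstar‖ := by
    intro l
    induction l with
    | zero => simp
    | succ l ih =>
      have hlt : ‖x l - xstar‖ < δ := by
        calc ‖x l - xstar‖ ≤ (1/2:ℝ)^l * ‖x 0 - xstar‖ := ih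
          _ ≤ 1 * ‖x 0 - xstar‖ := by
              apply mul_le_mul_of_nonneg_right _ (norm_nonneg _)
              exact pow_le_one₀ (by norm_num) (by norm_num)
          _ = ‖x 0 - xstar‖ := one_mul _
          _ < δ := hx0
      have := (step (x l) hlt).1
      rw [hiter l]
      calc ‖x l - Gi (x l) (F (x l)) - xstar‖ ≤ (1/2) * ‖x l - xstar‖ := this
        _ ≤ (1/2) * ((1/2:ℝ)^l * ‖x 0 - xstar‖) := by
            apply mul_le_mul_of_nonneg_left ih (by norm_num)
        _ = (1/2:ℝ)^(l+1) * ‖x 0 - xstar‖ := by ring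
  have hlt : ∀ l, ‖x l - xstar‖ < δ := by
    intro l
    calc ‖x l - xstar‖ ≤ (1/2:ℝ)^l * ‖x 0 - xstar‖ := decay l
      _ ≤ 1 * ‖x 0 - xstar‖ :=
          mul_le_mul_of_nonneg_right (pow_le_one₀ (by norm_num) (by norm_num)) (norm_nonneg _)
      _ = ‖x 0 - xstar‖ := one_mul _
      _ < δ := hx0
  constructor
  · -- convergence
    rw [tendsto_iff_norm_sub_tendsto_zero]
    apply squeeze_zero (fun l => norm_nonneg _) decay
    have : Tendsto (fun l : ℕ => (1/2:ℝ)^l) atTop (nhds 0) :=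
      tendsto_pow_atTop_nhds_zero_of_lt_one (by norm_num) (by norm_num)
    simpa using this.mul_const ‖x 0 - xstar‖
  · -- superlinear
    intro ε hε
    obtain ⟨δ₁, hδ₁, hN1⟩ := hNewton (ε / (C + 1)) (by positivity)
    -- find L with (1/2)^L * ‖x 0 - xstar‖ ≤ δ₁
    have htend : Tendsto (fun l : ℕ => (1/2:ℝ)^l * ‖x 0 - xstar‖) atTop (nhds 0) := by
      have : Tendsto (fun l : ℕ => (1/2:ℝ)^l) atTop (nhds 0) :=
        tendsto_pow_atTop_nhds_zero_of_lt_one (by norm_num) (by norm_num)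
      simpa using this.mul_const ‖x 0 - xstar‖
    obtain ⟨L, hL⟩ := (htend.eventually (eventually_le_nhds hδ₁)).exists_forall_of_atTop
    refine ⟨L, fun l hl => ?_⟩
    have hsmall : ‖x l - xstar‖ ≤ δ₁ := le_trans (decay l) (hL l hl)
    have hyN : x l ∈ N := (step (x l) (hlt l)).2
    have hest := hN1 (x l - xstar) hsmall (by rwa [add_sub_cancel])
    rw [add_sub_cancel] at hest
    have := key (x l) hyN _ hest
    rw [hiter l]
    calc ‖x l - Gi (x l) (F (x l)) - xstar‖ ≤ (C + 1) * (ε / (C + 1)) * ‖x l - xstar‖ := this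
      _ = ε * ‖x l - xstar‖ := by field_simp
end
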